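/- arXiv:1409.8108 — 4 statements merged into one kernel-verified Lean document; each statement's English description precedes it below -/
import Mathlib

section
/- Let α and β be partitions and r, s ≥ 1 positive integers. If β is obtained from α by removing a single hook of length rs, then β can also be obtained from α by successively removing r hooks, each of length s. -/
/-!
Removing an `rs`-hook moves one bead of the β-set from `a + r s` to the empty position `a`. This
is achieved by `r` moves of step `s` on the same runner of the `s`-abacus: if `a + (r - 1) s` is
empty, slide the bead there and recurse; otherwise recursively bring the bead sitting at
`a + (r - 1) s` down to `a` first and then slide the top bead into the vacated place. All
intermediate configurations have as many beads as the original one, so each of them is the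
β-set of a partition.
-/

/-- A partition: a weakly decreasing list of positive integers. -/
def IsPartition (l : List ℕ) : Prop :=
  l.Pairwise (· ≥ ·) ∧ ∀ x ∈ l, 0 < x

/-- A partition of `n`. -/
def IsPartitionOf (n : ℕ) (l : List ℕ) : Prop :=
  IsPartition l ∧ l.sum = n

/-- The β-set of the partition `l` consisting of `m` beta-numbers
(first-column hook lengths, padding `l` with zero parts up to length `m`). -/
def betaSetN (l : List ℕ) (m : ℕ) : Finset ℕ :=
  (Finset.range m).image (fun i => l.getD i 0 + (m - 1 - i))

/-- The canonical β-set of a partition. -/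
def betaSet (l : List ℕ) : Finset ℕ := betaSetN l l.length

/-- The Murnaghan–Nakayama recursion, computing the character value of the
partition with β-set `B` on the cycle type given by the list.  Removing a
`k`-hook corresponds to replacing a beta-number `x` by `x - k`, with sign
`(-1)` to the number of beta-numbers strictly between `x - k` and `x`
(the leg length of the hook). -/
def MN : List ℕ → Finset ℕ → ℤ
  | [], _ => 1
  | k :: μ, B =>
    ∑ x ∈ B.filter (fun x => k ≤ x ∧ x - k ∉ B),
      (-1) ^ (B.filter (fun y => x - k < y ∧ y < x)).card * MN μ (insert (x - k) (B.erase x))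

/-- `charVal α μ` is the value `χ^α_μ` of the irreducible character of the
symmetric group labeled by the partition `α` on the class of cycle type `μ`. -/
def charVal (α μ : List ℕ) : ℤ := MN μ (betaSet α)

/-- The degree of the irreducible character labeled by `α`
(its value on the identity). -/
def charDegree (α : List ℕ) : ℤ := charVal α (List.replicate α.sum 1)

/-- The `r`-weight of a partition: the number of `r`-hooks removed in passing
to the `r`-core, computed on the abacus. -/
def wt (r : ℕ) (α : List ℕ) : ℕ :=
  (∑ x ∈ betaSet α, x / r) -
    ∑ j ∈ Finset.range r, Nat.choose ((betaSet α).filter (fun x => x % r = j)).card 2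

/-- The hook length `h_{i,j}(α)` of the node `(i,j)` (1-indexed). -/
def hookLen (α : List ℕ) (i j : ℕ) : ℤ :=
  (α.getD (i - 1) 0 : ℤ) + ((α.filter (fun a => j ≤ a)).length : ℤ) - i - j + 1

/-- `RemoveHook k α β`: the partition `β` is obtained from `α` by removing a
single hook of length `k`. -/
def RemoveHook (k : ℕ) (α β : List ℕ) : Prop :=
  ∃ m, α.length ≤ m ∧ β.length ≤ m ∧ ∃ x ∈ betaSetN α m,
    k ≤ x ∧ x - k ∉ betaSetN α m ∧
    betaSetN β m = insert (x - k) ((betaSetN α m).erase x)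

/-- `RemoveHooksSeq ks α β`: `β` is obtained from `α` by successively removing
hooks of lengths given, in order, by the list `ks`. -/
def RemoveHooksSeq : List ℕ → List ℕ → List ℕ → Prop
  | [], α, β => α = β
  | k :: ks, α, β => ∃ γ, IsPartition γ ∧ RemoveHook k α γ ∧ RemoveHooksSeq ks γ β

/-- The partition `λ_{n,p} = ((p^k)^{a_k}, …, 1^{a_0})` where
`n = a_k p^k + … + a_0` is the `p`-adic expansion of `n`. -/
def padicType (p n : ℕ) : List ℕ :=
  ((List.range (Nat.digits p n).length).reverse).flatMap
    (fun i => List.replicate ((Nat.digits p n).getD i 0) (p ^ i))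

/-- A cycle type `μ` of `S_n` is `p`-vanishing if every irreducible character
of `S_n` of degree divisible by `p` vanishes on the class of cycle type `μ`. -/
def PVanishing (p n : ℕ) (μ : List ℕ) : Prop :=
  ∀ α : List ℕ, IsPartitionOf n α → (p : ℤ) ∣ charDegree α → charVal α μ = 0

def AbacusMove (s : ℕ) (B B' : Finset ℕ) : Prop :=
  ∃ x ∈ B, s ≤ x ∧ x - s ∉ B ∧ B' = insert (x - s) (B.erase x)

def AbacusChain (s : ℕ) : ℕ → Finset ℕ → Finset ℕ → Prop
  | 0, B, B' => B = B'
  | n + 1, B, B' => ∃ C, AbacusMove s B C ∧ AbacusChain s n C B'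

namespace AbacusMove

variable {s : ℕ} {B B' : Finset ℕ}

theorem insert_erase_add {a : ℕ} (ha : a + s ∈ B) (hfree : a ∉ B) :
    AbacusMove s B (insert a (B.erase (a + s))) :=
  ⟨a + s, ha, by omega, by rwa [Nat.add_sub_cancel], by rw [Nat.add_sub_cancel]⟩

theorem card_eq (h : AbacusMove s B B') : B'.card = B.card := by
  obtain ⟨x, hx, -, hfree, rfl⟩ := h
  rw [Finset.card_insert_of_notMem fun h ↦ hfree (Finset.mem_of_mem_erase h),
    Finset.card_erase_add_one hx]

end AbacusMove

namespace AbacusChain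

variable {s : ℕ}

theorem snoc {n : ℕ} {B C D : Finset ℕ} (h : AbacusChain s n B C) (hCD : AbacusMove s C D) :
    AbacusChain s (n + 1) B D := by
  induction n generalizing B with
  | zero => exact ⟨D, h ▸ hCD, rfl⟩
  | succ n ih =>
    obtain ⟨B₁, hB₁, h⟩ := h
    exact ⟨B₁, hB₁, ih h⟩

theorem insert_erase_add {B : Finset ℕ} {a : ℕ} (d : ℕ) (ha : a + d * s ∈ B)
    (hfree : a ∉ B) : AbacusChain s d B (insert a (B.erase (a + d * s))) := by
  induction d generalizing B with
  | zero => simp_all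
  | succ d ih =>
    rw [Nat.succ_mul, ← add_assoc] at ha ⊢
    have hs : s ≠ 0 := by
      rintro rfl
      simp_all
    have htop : a + d * s ≠ a + d * s + s := by omega
    have hbot : a ≠ a + d * s + s := by omega
    by_cases hmid : a + d * s ∈ B
    · have hlast := AbacusMove.insert_erase_add (s := s) (a := a + d * s)
        (B := insert a (B.erase (a + d * s))) (by grind) (by grind)
      exact (ih hmid hfree).snoc (by convert hlast using 1; grind)
    · refine ⟨_, AbacusMove.insert_erase_add ha hmid, ?_⟩
      obtain rfl | hd := Nat.eq_zero_or_pos d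
      · simp [AbacusChain]
      have hlow : a ≠ a + d * s := by have := Nat.mul_pos hd (Nat.pos_of_ne_zero hs); omega
      have hrest := ih (B := insert (a + d * s) (B.erase (a + d * s + s))) (by simp) (by grind)
      convert hrest using 1
      grind

end AbacusChain

theorem List.SortedGT.getElem_add_le {L : List ℕ} (hL : L.SortedGT) {i j : ℕ} (hij : i ≤ j)
    (hj : j < L.length) : L[j] + (j - i) ≤ L[i] := by
  induction j, hij using Nat.le_induction with
  | base => simp
  | succ j hij ih =>
    have hstep : L[j + 1] < L[j] :=
      (hL.getElem_lt_getElem_iff (hi := hj) (hj := by omega)).2 (by omega)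
    have := ih (by omega)
    omega

theorem antitone_getD_zero {l : List ℕ} (hl : l.Pairwise (· ≥ ·)) :
    Antitone (l.getD · 0) := by
  intro i j hij
  by_cases hj : j < l.length
  · simp only [List.getD_eq_getElem _ _ hj, List.getD_eq_getElem _ _ (hij.trans_lt hj)]
    rcases hij.lt_or_eq with hij | rfl
    · exact List.pairwise_iff_getElem.1 hl i j _ hj hij
    · rfl
  · simp only [List.getD_eq_default _ _ (not_lt.1 hj)]
    exact Nat.zero_le _

theorem getD_filter_ne_zero {l : List ℕ} (hl : l.Pairwise (· ≥ ·)) (i : ℕ) :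
    (l.filter (· ≠ 0)).getD i 0 = l.getD i 0 := by
  induction l generalizing i with
  | nil => rfl
  | cons a l ih =>
    rw [List.pairwise_cons] at hl
    rcases Nat.eq_zero_or_pos a with rfl | ha
    · have hl0 : ∀ b ∈ l, b = 0 := fun b hb ↦ Nat.le_zero.1 (hl.1 b hb)
      rw [List.filter_cons_of_neg (by simp), List.filter_eq_nil_iff.2 (by simpa using hl0)]
      cases i with
      | zero => rfl
      | succ i =>
        rw [List.getD_cons_succ, List.getD_nil, List.eq_replicate_iff.2 ⟨rfl, hl0⟩]
        simp
    · rw [List.filter_cons_of_pos (by simpa using ha.ne')]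
      cases i with
      | zero => rfl
      | succ i => simpa using ih hl.2 i

theorem card_betaSetN {l : List ℕ} (hl : l.Pairwise (· ≥ ·)) (m : ℕ) :
    (betaSetN l m).card = m := by
  rw [betaSetN, Finset.card_image_of_injOn, Finset.card_range]
  refine StrictAntiOn.injOn fun i hi j hj hij ↦ ?_
  have : l.getD j 0 ≤ l.getD i 0 := antitone_getD_zero hl hij.le
  simp only [Finset.coe_range, Set.mem_Iio] at hi hj
  omega

def paddedPartitionOfBetaSet (C : Finset ℕ) : List ℕ :=
  (C.sort (· ≥ ·)).mapIdx fun i x ↦ x - (C.card - 1 - i)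

def partitionOfBetaSet (C : Finset ℕ) : List ℕ :=
  (paddedPartitionOfBetaSet C).filter (· ≠ 0)

section partitionOfBetaSet

variable (C : Finset ℕ)

theorem length_paddedPartitionOfBetaSet : (paddedPartitionOfBetaSet C).length = C.card := by
  simp [paddedPartitionOfBetaSet]

theorem getElem_paddedPartitionOfBetaSet_add {i : ℕ} (hi : i < C.card) :
    (paddedPartitionOfBetaSet C)[i]'(by simpa [length_paddedPartitionOfBetaSet]) +
      (C.card - 1 - i) = (C.sort (· ≥ ·))[i]'(by simpa) := by
  have := C.sortedGT_sort.getElem_add_le (Nat.le_sub_one_of_lt hi)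
    (by rw [Finset.length_sort]; omega)
  simp only [paddedPartitionOfBetaSet, List.getElem_mapIdx]
  omega

theorem pairwise_paddedPartitionOfBetaSet :
    (paddedPartitionOfBetaSet C).Pairwise (· ≥ ·) := by
  refine List.pairwise_iff_getElem.2 fun i j hi hj hij ↦ ?_
  rw [length_paddedPartitionOfBetaSet] at hi hj
  have := C.sortedGT_sort.getElem_add_le hij.le (by simpa)
  have := getElem_paddedPartitionOfBetaSet_add C hi
  have := getElem_paddedPartitionOfBetaSet_add C hj
  omega

theorem isPartition_partitionOfBetaSet : IsPartition (partitionOfBetaSet C) :=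
  ⟨(pairwise_paddedPartitionOfBetaSet C).filter _,
    fun x hx ↦ Nat.pos_of_ne_zero (by simpa using (List.mem_filter.1 hx).2)⟩

theorem length_partitionOfBetaSet_le : (partitionOfBetaSet C).length ≤ C.card :=
  (List.length_filter_le _ _).trans (length_paddedPartitionOfBetaSet C).le

theorem betaSetN_partitionOfBetaSet : betaSetN (partitionOfBetaSet C) C.card = C := by
  have key {i : ℕ} (hi : i < C.card) :
      (partitionOfBetaSet C).getD i 0 + (C.card - 1 - i) = (C.sort (· ≥ ·))[i]'(by simpa) := by
    rw [partitionOfBetaSet, getD_filter_ne_zero (pairwise_paddedPartitionOfBetaSet C),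
      List.getD_eq_getElem _ _ (by rwa [length_paddedPartitionOfBetaSet]),
      getElem_paddedPartitionOfBetaSet_add C hi]
  ext x
  rw [betaSetN, Finset.mem_image, ← Finset.mem_sort (· ≥ ·), List.mem_iff_getElem]
  constructor
  · rintro ⟨i, hi, rfl⟩
    rw [Finset.mem_range] at hi
    exact ⟨i, by simpa, (key hi).symm⟩
  · rintro ⟨i, hi, rfl⟩
    rw [Finset.length_sort] at hi
    exact ⟨i, Finset.mem_range.2 hi, key hi⟩

end partitionOfBetaSet

theorem removeHooksSeq_replicate_of_abacusChain {s m n : ℕ} {γ β : List ℕ}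
    (hγ : γ.Pairwise (· ≥ ·)) (hγm : γ.length ≤ m) (hβ : IsPartition β)
    (hβm : β.length ≤ m)
    (h : AbacusChain s (n + 1) (betaSetN γ m) (betaSetN β m)) :
    RemoveHooksSeq (List.replicate (n + 1) s) γ β := by
  induction n generalizing γ with
  | zero =>
    obtain ⟨C, hmove, rfl⟩ := h
    exact ⟨β, hβ, ⟨m, hγm, hβm, hmove⟩, rfl⟩
  | succ n ih =>
    obtain ⟨C, hmove, h⟩ := h
    have hC : C.card = m := by rw [hmove.card_eq, card_betaSetN hγ]
    have hδ : betaSetN (partitionOfBetaSet C) m = C := hC ▸ betaSetN_partitionOfBetaSet C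
    have hδm : (partitionOfBetaSet C).length ≤ m := hC ▸ length_partitionOfBetaSet_le C
    rw [← hδ] at hmove h
    exact ⟨_, isPartition_partitionOfBetaSet C, ⟨m, hγm, hδm, hmove⟩,
      ih (isPartition_partitionOfBetaSet C).1 hδm h⟩

theorem removeHook_mul_general (α β : List ℕ) (r s : ℕ) (hα : IsPartition α)
    (hβ : IsPartition β) (hr : 1 ≤ r)
    (h : RemoveHook (r * s) α β) :
    RemoveHooksSeq (List.replicate r s) α β := by
  obtain ⟨m, hαm, hβm, x, hx, hrs, hfree, hβx⟩ := h
  obtain ⟨n, rfl⟩ := Nat.exists_eq_add_of_le' hr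
  have hchain := AbacusChain.insert_erase_add (n + 1) (a := x - (n + 1) * s)
    (by rwa [Nat.sub_add_cancel hrs]) hfree
  rw [Nat.sub_add_cancel hrs, ← hβx] at hchain
  exact removeHooksSeq_replicate_of_abacusChain hα.1 hαm hβ hβm hchain

/-- removing one `rs`-hook can be realised as removing `r`
hooks of length `s` in succession. -/
theorem removeHook_mul (α β : List ℕ) (r s : ℕ) (hα : IsPartition α)
    (hβ : IsPartition β) (hr : 1 ≤ r) (hs : 1 ≤ s)
    (h : RemoveHook (r * s) α β) :
    RemoveHooksSeq (List.replicate r s) α β :=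
  removeHook_mul_general α β r s hα hβ hr h
end

section
/- Let α be a partition and r, s positive integers. If β is obtained from α by removing a hook of length rs, then the r-weight of β equals the r-weight of α minus s. -/
/-! On an `r`-abacus, `wt r α` is `∑ ⌊x / r⌋ - ∑_j C(n_j, 2)` for the β-set of `α`, where
`n_j` counts the beads on runner `j`. This quantity does not depend on the number of beta-numbers
used: adding a bead at `0` and shifting all others by one moves the beads of runner `j` to runner
`j + 1` (runner `r - 1` wrapping around to runner `0`), so if `c` beads sit on runner `r - 1`, both
sums grow by `c`. Removing an `rs`-hook replaces a beta-number `x` by `x - rs`, which moves one bead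
`s` steps up its runner: the first sum drops by `s`, the runner counts are unchanged. -/

open Finset

theorem Nat.succ_choose_two (n : ℕ) : (n + 1).choose 2 = n + n.choose 2 := by
  rw [Nat.choose_succ_succ, Nat.choose_one_right]

theorem Finset.choose_card_two_le_sum (s : Finset ℕ) : (#s).choose 2 ≤ ∑ x ∈ s, x := by
  induction s using Finset.induction_on_max with
  | empty => simp
  | insert a s ha ih =>
    have has : a ∉ s := fun h => lt_irrefl a (ha a h)
    have hcard : #s ≤ a := by
      simpa using card_le_card fun x hx => mem_range.mpr (ha x hx)
    rw [card_insert_of_notMem has, sum_insert has, Nat.succ_choose_two]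
    omega

theorem Finset.card_filter_insert_erase {α : Type*} [DecidableEq α] {p : α → Prop}
    [DecidablePred p] {B : Finset α} {x y : α} (hx : x ∈ B) (hy : y ∉ B) (hpyx : p y ↔ p x) :
    #((insert y (B.erase x)).filter p) = #(B.filter p) := by
  have hy' : y ∉ (B.filter p).erase x := fun h => hy (mem_of_mem_filter _ (mem_of_mem_erase h))
  by_cases hpx : p x
  · have hxp : x ∈ B.filter p := mem_filter.mpr ⟨hx, hpx⟩
    rw [filter_insert, if_pos (hpyx.mpr hpx), filter_erase, card_insert_of_notMem hy',
      card_erase_add_one hxp]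
  · have hxp : x ∉ B.filter p := fun h => hpx (mem_filter.mp h).2
    rw [filter_insert, if_neg (hpyx.not.mpr hpx), filter_erase, erase_eq_of_notMem hxp]

theorem Nat.dvd_add_one_iff_mod_eq_sub_one {r x : ℕ} (hr : 0 < r) :
    r ∣ x + 1 ↔ x % r = r - 1 := by
  have h : (x + 1) % r = (r - 1 + 1) % r ↔ x % r = (r - 1) % r :=
    ⟨Nat.ModEq.add_right_cancel' 1, Nat.ModEq.add_right 1⟩
  rwa [Nat.sub_add_cancel hr, Nat.mod_self, Nat.mod_eq_of_lt (Nat.sub_lt hr one_pos),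
    ← Nat.dvd_iff_mod_eq_zero] at h

namespace Abacus

def levelSum (r : ℕ) (B : Finset ℕ) : ℕ := ∑ x ∈ B, x / r

def runnerPairs (r : ℕ) (B : Finset ℕ) : ℕ :=
  ∑ j ∈ range r, (#(B.filter (· % r = j))).choose 2

def weight (r : ℕ) (B : Finset ℕ) : ℤ := levelSum r B - runnerPairs r B

def shift (B : Finset ℕ) : Finset ℕ := insert 0 (B.image (· + 1))

theorem runnerPairs_le_levelSum (r : ℕ) (B : Finset ℕ) : runnerPairs r B ≤ levelSum r B := by
  rcases r.eq_zero_or_pos with rfl | hr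
  · simp [runnerPairs]
  rw [runnerPairs, levelSum,
    ← sum_fiberwise_of_maps_to (fun x _ => mem_range.mpr (Nat.mod_lt x hr)) (· / r)]
  refine sum_le_sum fun j _ => ?_
  have hinj : Set.InjOn (· / r) (B.filter (· % r = j) : Set ℕ) := fun a ha b hb hab => by
    rw [← Nat.div_add_mod a r, ← Nat.div_add_mod b r, (mem_filter.mp ha).2,
      (mem_filter.mp hb).2, show a / r = b / r from hab]
  calc (#(B.filter (· % r = j))).choose 2
      = (#((B.filter (· % r = j)).image (· / r))).choose 2 := by rw [card_image_of_injOn hinj]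
    _ ≤ ∑ y ∈ (B.filter (· % r = j)).image (· / r), y := choose_card_two_le_sum _
    _ = ∑ x ∈ B.filter (· % r = j), x / r := sum_image hinj

section Shift

variable {r : ℕ} (B : Finset ℕ)

theorem card_filter_image_succ {i : ℕ} (hi : i < r) :
    #((B.image (· + 1)).filter (· % r = (i + 1) % r)) = #(B.filter (· % r = i)) := by
  rw [filter_image, card_image_of_injective _ (add_left_injective 1)]
  congr 1
  refine filter_congr fun x _ => ⟨fun h => ?_, fun h => ?_⟩
  · exact Eq.trans (Nat.ModEq.add_right_cancel' 1 h) (Nat.mod_eq_of_lt hi)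
  · exact Nat.ModEq.add_right 1 (h.trans (Nat.mod_eq_of_lt hi).symm)

theorem levelSum_shift (hr : 0 < r) :
    levelSum r (shift B) = levelSum r B + #(B.filter (· % r = r - 1)) := by
  rw [shift, levelSum, sum_insert (by simp), sum_image (add_left_injective 1).injOn,
    Nat.zero_div, zero_add]
  simp only [Nat.succ_div, Nat.dvd_add_one_iff_mod_eq_sub_one hr, sum_add_distrib, sum_boole,
    Nat.cast_id]
  rfl

theorem runnerPairs_shift (hr : 0 < r) :
    runnerPairs r (shift B) = runnerPairs r B + #(B.filter (· % r = r - 1)) := by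
  obtain ⟨n, rfl⟩ : ∃ n, r = n + 1 := ⟨r - 1, by omega⟩
  have runner_succ : ∀ i ∈ range n,
      (#((shift B).filter (· % (n + 1) = i + 1))).choose 2 =
        (#(B.filter (· % (n + 1) = i))).choose 2 := fun i hi => by
    have hi : i + 1 < n + 1 := by simpa using hi
    rw [shift, filter_insert, if_neg (by simp), ← Nat.mod_eq_of_lt hi,
      card_filter_image_succ B (Nat.lt_of_succ_lt hi)]
  have runner_zero :
      #((shift B).filter (· % (n + 1) = 0)) = #(B.filter (· % (n + 1) = n)) + 1 := by
    rw [shift, filter_insert, if_pos (Nat.zero_mod _), card_insert_of_notMem (by simp),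
      ← Nat.mod_self (n + 1), card_filter_image_succ B (Nat.lt_succ_self n)]
  rw [runnerPairs, runnerPairs, sum_range_succ', sum_range_succ, sum_congr rfl runner_succ,
    runner_zero, Nat.succ_choose_two, Nat.add_sub_cancel]
  ring

theorem weight_shift (hr : 0 < r) : weight r (shift B) = weight r B := by
  rw [weight, weight, levelSum_shift B hr, runnerPairs_shift B hr]
  push_cast
  ring

end Shift

section MoveBead

variable {r s x : ℕ} {B : Finset ℕ}

theorem levelSum_insert_sub_erase (hr : 0 < r) (hx : x ∈ B) (hk : r * s ≤ x)
    (hy : x - r * s ∉ B) :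
    levelSum r (insert (x - r * s) (B.erase x)) + s = levelSum r B := by
  have hs : s ≤ x / r := (Nat.le_div_iff_mul_le hr).mpr (by rwa [Nat.mul_comm])
  unfold levelSum
  rw [sum_insert fun h => hy (mem_of_mem_erase h), Nat.sub_mul_div,
    ← sum_erase_add B _ hx]
  omega

theorem runnerPairs_insert_sub_erase (hx : x ∈ B) (hk : r * s ≤ x) (hy : x - r * s ∉ B) :
    runnerPairs r (insert (x - r * s) (B.erase x)) = runnerPairs r B :=
  sum_congr rfl fun j _ => by
    rw [card_filter_insert_erase hx hy (by rw [Nat.sub_mul_mod hk])]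

theorem weight_insert_sub_erase (hr : 0 < r) (hx : x ∈ B) (hk : r * s ≤ x)
    (hy : x - r * s ∉ B) :
    weight r (insert (x - r * s) (B.erase x)) = weight r B - s := by
  rw [weight, weight, runnerPairs_insert_sub_erase hx hk hy,
    ← levelSum_insert_sub_erase hr hx hk hy]
  push_cast
  ring

end MoveBead

end Abacus

open Abacus

theorem wt_eq_weight (r : ℕ) (l : List ℕ) : (wt r l : ℤ) = weight r (betaSet l) :=
  Nat.cast_sub (runnerPairs_le_levelSum r _)

theorem betaSetN_succ {l : List ℕ} {m : ℕ} (hm : l.length ≤ m) :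
    betaSetN l (m + 1) = shift (betaSetN l m) := by
  rw [betaSetN, range_add_one, image_insert, List.getD_eq_default _ _ hm, shift, betaSetN,
    image_image]
  congr 1
  · omega
  · refine image_congr fun i hi => ?_
    simp only [coe_range, Set.mem_Iio] at hi
    simp only [Function.comp_apply]
    omega

theorem weight_betaSetN {r : ℕ} (hr : 0 < r) {l : List ℕ} {m : ℕ} (hm : l.length ≤ m) :
    weight r (betaSetN l m) = weight r (betaSet l) := by
  induction m, hm using Nat.le_induction with
  | base => rfl
  | succ m hm ih => rw [betaSetN_succ hm, weight_shift _ hr, ih]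

theorem wt_removeHook_general (α β : List ℕ) (r s : ℕ)
    (h : RemoveHook (r * s) α β) :
    (wt r β : ℤ) = (wt r α : ℤ) - s := by
  obtain ⟨m, hmα, hmβ, x, hx, hk, hy, hβ⟩ := h
  -- for `r = 0` the hook would leave the bead `x` in place
  have hr : 0 < r := Nat.pos_of_ne_zero fun hr => hy (by simpa [hr] using hx)
  rw [wt_eq_weight, wt_eq_weight, ← weight_betaSetN hr hmα, ← weight_betaSetN hr hmβ, hβ,
    weight_insert_sub_erase hr hx hk hy]

/-- removing an `rs`-hook decreases the `r`-weight by `s`. -/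
theorem wt_removeHook (α β : List ℕ) (r s : ℕ) (hα : IsPartition α)
    (hβ : IsPartition β) (hr : 1 ≤ r) (hs : 1 ≤ s)
    (h : RemoveHook (r * s) α β) :
    (wt r β : ℤ) = (wt r α : ℤ) - s :=
  wt_removeHook_general α β r s h
end

section
/- Let p be a prime, t ≥ 0, and write n = d_t p^t + e_t with 0 ≤ e_t < p^t. Assume d_t ≠ 0, e_t ≠ 0, and let α = (c, 1^{n−c}) be a hook partition with e_t ≤ n − c < p^t. Then p divides the degree of the irreducible character χ^α of S_n. -/
/-! The hook `(k + 1, 1 ^ r)` has degree `C(k + r, r)`: in the Murnaghan–Nakayama recursion on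
`1`-cycles the only removable nodes are the ends of the arm and of the leg, which is Pascal's rule.
For `c = k + 1` and `r = n - c`, the residues of `r` and `k` modulo `p ^ t` add up to
`p ^ t + e - 1 ≥ p ^ t`, so adding `r` and `k` in base `p` carries, and by Kummer's theorem
`p ∣ C(k + r, r)`. -/

theorem Nat.Prime.dvd_choose_add_of_pow_le_mod_add_mod {p n k t : ℕ} (hp : p.Prime)
    (hcarry : p ^ t ≤ k % p ^ t + n % p ^ t) : p ∣ (n + k).choose k := by
  have ht : t ≠ 0 := by
    rintro rfl
    simp [Nat.mod_one] at hcarry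
  have hpt : p ^ t ≤ n + k :=
    hcarry.trans ((add_le_add (Nat.mod_le k _) (Nat.mod_le n _)).trans_eq (add_comm k n))
  have hlog : t ≤ Nat.log p (n + k) :=
    (Nat.le_log_iff_pow_le hp.one_lt (by have := pow_pos hp.pos t; omega)).mpr hpt
  have hcarries : 0 < (Finset.filter (fun i => p ^ i ≤ k % p ^ i + n % p ^ i)
      (Finset.Ico 1 (Nat.log p (n + k) + 1))).card :=
    Finset.card_pos.mpr ⟨t, by simp only [Finset.mem_filter, Finset.mem_Ico]; omega⟩
  have hmult : (1 : ℕ∞) ≤ emultiplicity p ((n + k).choose k) := by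
    rw [hp.emultiplicity_choose' (Nat.lt_succ_self _)]
    exact_mod_cast hcarries
  simpa using pow_dvd_of_le_emultiplicity hmult

-- The `m`-bead β-set of the hook `(k + 1, 1 ^ b)`: a gap at `m - 1 - b` and an extra bead at `m + k`.
def hookBetaSet (k b m : ℕ) : Finset ℕ :=
  insert (m + k) ((Finset.range m).erase (m - 1 - b))

lemma mem_hookBetaSet {k b m x : ℕ} :
    x ∈ hookBetaSet k b m ↔ x = m + k ∨ x ≠ m - 1 - b ∧ x < m := by
  simp [hookBetaSet]

lemma betaSet_hook (k r : ℕ) :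
    betaSet ((k + 1) :: List.replicate r 1) = hookBetaSet k r (r + 1) := by
  ext x
  simp only [betaSet, betaSetN, List.length_cons, List.length_replicate, Finset.mem_image,
    Finset.mem_range, mem_hookBetaSet]
  constructor
  · rintro ⟨_ | i, hi, rfl⟩
    · simp only [List.getD_cons_zero]
      omega
    · simp only [List.getD_cons_succ, List.getD_replicate, show i < r by omega]
      omega
  · rintro (rfl | ⟨hx0, hxr⟩)
    · exact ⟨0, by omega, by simp only [List.getD_cons_zero]; omega⟩
    · refine ⟨r + 1 - x, by omega, ?_⟩
      rw [show r + 1 - x = (r - x) + 1 by omega, List.getD_cons_succ,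
        List.getD_replicate 1 (show r - x < r by omega)]
      omega

lemma MN_replicate_one_succ (n : ℕ) (B : Finset ℕ) :
    MN (List.replicate (n + 1) 1) B =
      ∑ x ∈ B.filter (fun x => 1 ≤ x ∧ x - 1 ∉ B),
        MN (List.replicate n 1) (insert (x - 1) (B.erase x)) := by
  rw [List.replicate_succ, MN]
  refine Finset.sum_congr rfl fun x _ => ?_
  rw [Finset.filter_false_of_mem (by omega), Finset.card_empty, pow_zero, one_mul]

section hook

variable {m : ℕ}

lemma MN_hookBetaSet_zero_zero (hm : 0 < m) : MN [1] (hookBetaSet 0 0 m) = 1 := by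
  have hremovable : (hookBetaSet 0 0 m).filter
      (fun x => 1 ≤ x ∧ x - 1 ∉ hookBetaSet 0 0 m) = {m} := by
    ext x
    simp only [Finset.mem_filter, Finset.mem_singleton, mem_hookBetaSet]
    omega
  rw [← List.replicate_one, MN_replicate_one_succ, hremovable, Finset.sum_singleton]
  rfl

lemma MN_hookBetaSet_succ_zero (hm : 0 < m) (k : ℕ) :
    MN (List.replicate (k + 2) 1) (hookBetaSet (k + 1) 0 m) =
      MN (List.replicate (k + 1) 1) (hookBetaSet k 0 m) := by
  have hremovable : (hookBetaSet (k + 1) 0 m).filter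
      (fun x => 1 ≤ x ∧ x - 1 ∉ hookBetaSet (k + 1) 0 m) = {m + (k + 1)} := by
    ext x
    simp only [Finset.mem_filter, Finset.mem_singleton, mem_hookBetaSet]
    omega
  rw [MN_replicate_one_succ, hremovable, Finset.sum_singleton]
  congr 1
  ext x
  simp only [Finset.mem_insert, Finset.mem_erase, mem_hookBetaSet]
  omega

lemma MN_hookBetaSet_zero_succ {b : ℕ} (hb : b + 1 < m) :
    MN (List.replicate (b + 2) 1) (hookBetaSet 0 (b + 1) m) =
      MN (List.replicate (b + 1) 1) (hookBetaSet 0 b m) := by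
  have hremovable : (hookBetaSet 0 (b + 1) m).filter
      (fun x => 1 ≤ x ∧ x - 1 ∉ hookBetaSet 0 (b + 1) m) = {m - 1 - b} := by
    ext x
    simp only [Finset.mem_filter, Finset.mem_singleton, mem_hookBetaSet]
    omega
  rw [MN_replicate_one_succ, hremovable, Finset.sum_singleton]
  congr 1
  ext x
  simp only [Finset.mem_insert, Finset.mem_erase, mem_hookBetaSet]
  omega

lemma MN_hookBetaSet_succ_succ {b : ℕ} (hb : b + 1 < m) (k : ℕ) :
    MN (List.replicate (k + b + 3) 1) (hookBetaSet (k + 1) (b + 1) m) =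
      MN (List.replicate (k + b + 2) 1) (hookBetaSet k (b + 1) m) +
        MN (List.replicate (k + b + 2) 1) (hookBetaSet (k + 1) b m) := by
  have hremovable : (hookBetaSet (k + 1) (b + 1) m).filter
      (fun x => 1 ≤ x ∧ x - 1 ∉ hookBetaSet (k + 1) (b + 1) m) = {m + (k + 1), m - 1 - b} := by
    ext x
    simp only [Finset.mem_filter, Finset.mem_insert, Finset.mem_singleton, mem_hookBetaSet]
    omega
  rw [MN_replicate_one_succ, hremovable, Finset.sum_pair (by omega)]
  congr 2 <;>
  · ext x
    simp only [Finset.mem_insert, Finset.mem_erase, mem_hookBetaSet]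
    omega

theorem MN_hookBetaSet : ∀ {k b : ℕ}, b < m →
    MN (List.replicate (k + b + 1) 1) (hookBetaSet k b m) = ((k + b).choose b : ℤ)
  | 0, 0, hb => MN_hookBetaSet_zero_zero hb
  | k + 1, 0, hb => by
    rw [MN_hookBetaSet_succ_zero hb, MN_hookBetaSet hb]
    simp
  | 0, b + 1, hb => by
    have hprev := MN_hookBetaSet (k := 0) (b := b) (by omega)
    rw [zero_add] at hprev
    rw [zero_add, MN_hookBetaSet_zero_succ hb, hprev]
    simp
  | k + 1, b + 1, hb => by
    have harm : MN (List.replicate (k + b + 2) 1) (hookBetaSet k (b + 1) m) =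
        ((k + b + 1).choose (b + 1) : ℤ) :=
      MN_hookBetaSet hb
    have hleg : MN (List.replicate (k + b + 2) 1) (hookBetaSet (k + 1) b m) =
        ((k + b + 1).choose b : ℤ) := by
      rw [show k + b + 2 = k + 1 + b + 1 by ring, show k + b + 1 = k + 1 + b by ring]
      exact MN_hookBetaSet (by omega)
    rw [show k + 1 + (b + 1) + 1 = k + b + 3 by ring, MN_hookBetaSet_succ_succ hb, harm, hleg,
      show k + 1 + (b + 1) = k + b + 1 + 1 by ring, Nat.choose_succ_succ' (k + b + 1) b]
    push_cast
    ring

end hook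

lemma charDegree_hook (k r : ℕ) :
    charDegree ((k + 1) :: List.replicate r 1) = ((k + r).choose r : ℤ) := by
  have hsum : ((k + 1) :: List.replicate r 1).sum = k + r + 1 := by
    simp only [List.sum_cons, List.sum_replicate, smul_eq_mul, mul_one]
    ring
  rw [charDegree, charVal, hsum, betaSet_hook, MN_hookBetaSet (Nat.lt_succ_self r)]

theorem dvd_degree_hook_partition_general (p t d e n c : ℕ) (hp : p.Prime)
    (hn : n = d * p ^ t + e) (hd : d ≠ 0) (he : e ≠ 0)
    (h1 : e ≤ n - c) (h2 : n - c < p ^ t) :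
    (p : ℤ) ∣ charDegree (c :: List.replicate (n - c) 1) := by
  have hpt : p ^ t ≤ d * p ^ t := Nat.le_mul_of_pos_left _ (Nat.pos_of_ne_zero hd)
  obtain ⟨k, rfl⟩ : ∃ k, c = k + 1 := Nat.exists_eq_add_one.mpr (by omega)
  set r := n - (k + 1) with hr
  have hk : k = (p ^ t + e - 1 - r) + (d - 1) * p ^ t := by
    rw [Nat.sub_one_mul]
    omega
  rw [charDegree_hook, Int.natCast_dvd_natCast]
  refine hp.dvd_choose_add_of_pow_le_mod_add_mod (t := t) ?_
  rw [Nat.mod_eq_of_lt h2, hk, Nat.add_mul_mod_self_right, Nat.mod_eq_of_lt (by omega)]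
  omega

/-- hook partitions `(c, 1^{n-c})` with `e_t ≤ n - c < p^t`
label characters of degree divisible by `p`. -/
theorem dvd_degree_hook_partition (p t d e n c : ℕ) (hp : p.Prime)
    (hn : n = d * p ^ t + e) (hd : d ≠ 0) (he : e ≠ 0) (he' : e < p ^ t)
    (hc : c ≤ n) (h1 : e ≤ n - c) (h2 : n - c < p ^ t) :
    (p : ℤ) ∣ charDegree (c :: List.replicate (n - c) 1) :=
  dvd_degree_hook_partition_general p t d e n c hp hn hd he h1 h2
end

section
/- For b ≥ 0 and a ≥ 0 with a + 2b ≥ 3, the irreducible character of S_{a+2b} labeled by (a + 2b − 2, 1, 1) takes the value −b + (a−1)(a−2)/2 on the conjugacy class of cycle type (2^b, 1^a). -/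
/-!
With three beta-numbers, `{s + 2, 1, 0}`, `{s + 1, 2, 0}` and `{n, 2, 1}` are the β-sets of
`(s)`, `(s - 1, 1)` and `(n - 2, 1, 1)`. On each of them a 1- or 2-hook can be removed in at most
two ways, so the Murnaghan–Nakayama rule gives short recursions: `χ^{(s)} = 1`,
`χ^{(s-1,1)}(1^s) = s - 1`, the branching rule `χ^{(a-2,1,1)}(1^a) = χ^{(a-3,1,1)}(1^{a-1}) +
χ^{(a-2,1)}(1^{a-1})` sums to `(a-1)(a-2)/2`, and removing a 2-cycle gives
`χ^{(n-2,1,1)}(2, μ) = χ^{(n-4,1,1)}(μ) - χ^{(n-2)}(μ)` for `n ≥ 5`, each 2-cycle contributing `-1`;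
the cases `n ≤ 4` are evaluated directly.
-/

lemma MN_row (μ : List ℕ) (hμ : ∀ k ∈ μ, 0 < k) (s : ℕ) (hs : μ.sum ≤ s) :
    MN μ ({s + 2, 1, 0} : Finset ℕ) = 1 := by
  induction μ generalizing s with
  | nil => rfl
  | cons k μ ih =>
    simp only [List.mem_cons, forall_eq_or_imp, List.sum_cons] at hμ hs
    have removable : ({s + 2, 1, 0} : Finset ℕ).filter
        (fun x => k ≤ x ∧ x - k ∉ ({s + 2, 1, 0} : Finset ℕ)) = {s + 2} := by
      ext x; simp; omega
    have leg : ({s + 2, 1, 0} : Finset ℕ).filter (fun y => s + 2 - k < y ∧ y < s + 2) = ∅ := by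
      ext y; simp; omega
    have removed : insert (s + 2 - k) (({s + 2, 1, 0} : Finset ℕ).erase (s + 2)) =
        {(s - k) + 2, 1, 0} := by
      ext y; simp; omega
    rw [MN, removable, Finset.sum_singleton, leg, removed, ih hμ.2 (s - k) (by omega)]
    simp

lemma MN_cons_one_hook (μ : List ℕ) (n : ℕ) (hn : 3 ≤ n) :
    MN (1 :: μ) ({n + 1, 2, 0} : Finset ℕ) =
      MN μ ({n, 2, 0} : Finset ℕ) + MN μ ({n + 1, 1, 0} : Finset ℕ) := by
  have removable : ({n + 1, 2, 0} : Finset ℕ).filter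
      (fun x => 1 ≤ x ∧ x - 1 ∉ ({n + 1, 2, 0} : Finset ℕ)) = {n + 1, 2} := by
    ext x; simp; omega
  have leg₁ : ({n + 1, 2, 0} : Finset ℕ).filter (fun y => n + 1 - 1 < y ∧ y < n + 1) = ∅ := by
    ext y; simp
  have leg₂ : ({n + 1, 2, 0} : Finset ℕ).filter (fun y => 2 - 1 < y ∧ y < 2) = ∅ := by
    ext y; simp
  have removed₁ : insert (n + 1 - 1) (({n + 1, 2, 0} : Finset ℕ).erase (n + 1)) = {n, 2, 0} := by
    ext y; simp; omega
  have removed₂ : insert (2 - 1) (({n + 1, 2, 0} : Finset ℕ).erase 2) = {n + 1, 1, 0} := by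
    ext y; simp; omega
  rw [MN, removable, Finset.sum_pair (by omega), leg₁, leg₂, removed₁, removed₂]
  simp

lemma MN_replicate_one_hook (s : ℕ) (hs : 2 ≤ s) :
    MN (List.replicate s 1) ({s + 1, 2, 0} : Finset ℕ) = (s : ℤ) - 1 := by
  induction s, hs using Nat.le_induction with
  | base => decide
  | succ s hs ih =>
    rw [List.replicate_succ, MN_cons_one_hook _ _ (by omega), ih,
      MN_row _ (by simp) s (by simp)]
    push_cast
    ring

lemma MN_cons_one_twoLegs (μ : List ℕ) (n : ℕ) (hn : 3 ≤ n) :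
    MN (1 :: μ) ({n + 1, 2, 1} : Finset ℕ) =
      MN μ ({n, 2, 1} : Finset ℕ) + MN μ ({n + 1, 2, 0} : Finset ℕ) := by
  have removable : ({n + 1, 2, 1} : Finset ℕ).filter
      (fun x => 1 ≤ x ∧ x - 1 ∉ ({n + 1, 2, 1} : Finset ℕ)) = {n + 1, 1} := by
    ext x; simp; omega
  have leg₁ : ({n + 1, 2, 1} : Finset ℕ).filter (fun y => n + 1 - 1 < y ∧ y < n + 1) = ∅ := by
    ext y; simp
  have leg₂ : ({n + 1, 2, 1} : Finset ℕ).filter (fun y => 1 - 1 < y ∧ y < 1) = ∅ := by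
    ext y; simp; omega
  have removed₁ : insert (n + 1 - 1) (({n + 1, 2, 1} : Finset ℕ).erase (n + 1)) = {n, 2, 1} := by
    ext y; simp; omega
  have removed₂ : insert (1 - 1) (({n + 1, 2, 1} : Finset ℕ).erase 1) = {n + 1, 2, 0} := by
    ext y; simp; omega
  rw [MN, removable, Finset.sum_pair (by omega), leg₁, leg₂, removed₁, removed₂]
  simp

lemma MN_replicate_one_twoLegs (a : ℕ) (ha : 3 ≤ a) :
    MN (List.replicate a 1) ({a, 2, 1} : Finset ℕ) = ((a : ℤ) - 1) * ((a : ℤ) - 2) / 2 := by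
  induction a, ha using Nat.le_induction with
  | base => decide
  | succ a ha ih =>
    rw [List.replicate_succ, MN_cons_one_twoLegs _ _ ha, ih, MN_replicate_one_hook a (by omega)]
    calc ((a : ℤ) - 1) * ((a : ℤ) - 2) / 2 + ((a : ℤ) - 1)
        = (((a : ℤ) - 1) * ((a : ℤ) - 2) + ((a : ℤ) - 1) * 2) / 2 :=
          (Int.add_mul_ediv_right _ _ two_ne_zero).symm
      _ = (((a + 1 : ℕ) : ℤ) - 1) * (((a + 1 : ℕ) : ℤ) - 2) / 2 := by push_cast; ring_nf

lemma MN_cons_two_twoLegs (μ : List ℕ) (n : ℕ) (hn : 3 ≤ n) :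
    MN (2 :: μ) ({n + 2, 2, 1} : Finset ℕ) =
      MN μ ({n, 2, 1} : Finset ℕ) - MN μ ({n + 2, 1, 0} : Finset ℕ) := by
  have removable : ({n + 2, 2, 1} : Finset ℕ).filter
      (fun x => 2 ≤ x ∧ x - 2 ∉ ({n + 2, 2, 1} : Finset ℕ)) = {n + 2, 2} := by
    ext x; simp; omega
  have leg₁ : ({n + 2, 2, 1} : Finset ℕ).filter (fun y => n + 2 - 2 < y ∧ y < n + 2) = ∅ := by
    ext y; simp; omega
  have leg₂ : ({n + 2, 2, 1} : Finset ℕ).filter (fun y => 2 - 2 < y ∧ y < 2) = {1} := by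
    ext y; simp; omega
  have removed₁ : insert (n + 2 - 2) (({n + 2, 2, 1} : Finset ℕ).erase (n + 2)) = {n, 2, 1} := by
    ext y; simp; omega
  have removed₂ : insert (2 - 2) (({n + 2, 2, 1} : Finset ℕ).erase 2) = {n + 2, 1, 0} := by
    ext y; simp; omega
  rw [MN, removable, Finset.sum_pair (by omega), leg₁, leg₂, removed₁, removed₂,
    Finset.card_empty, Finset.card_singleton]
  ring

lemma MN_replicate_two_append_twoLegs (b a : ℕ) (h : 3 ≤ a + 2 * b) :
    MN (List.replicate b 2 ++ List.replicate a 1) ({a + 2 * b, 2, 1} : Finset ℕ) =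
      -(b : ℤ) + ((a : ℤ) - 1) * ((a : ℤ) - 2) / 2 := by
  induction b generalizing a with
  | zero => simpa using MN_replicate_one_twoLegs a h
  | succ b ih =>
    rw [List.replicate_succ, List.cons_append, show a + 2 * (b + 1) = a + 2 * b + 2 by ring]
    by_cases hn : 3 ≤ a + 2 * b
    · rw [MN_cons_two_twoLegs _ _ hn, ih a hn,
        MN_row _ (fun k hk => by simp at hk; omega) _ (by simp; omega)]
      push_cast
      ring
    · obtain ⟨rfl, rfl⟩ | ⟨rfl, rfl⟩ | ⟨rfl, rfl⟩ : a = 1 ∧ b = 0 ∨ a = 2 ∧ b = 0 ∨ a = 0 ∧ b = 1 :=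
        by omega
      all_goals decide

lemma betaSet_cons_one_one (m : ℕ) : betaSet (m :: [1, 1]) = {m + 2, 2, 1} := by
  ext x
  simp [betaSet, betaSetN, Finset.range_add_one]
  omega

/-- `χ^{(a+2b-2,1,1)}` on the class of cycle type `(2^b, 1^a)`
equals `-b + (a-1)(a-2)/2`. -/
theorem charVal_two_ones (a b : ℕ) (h : 3 ≤ a + 2 * b) :
    charVal ((a + 2 * b - 2) :: [1, 1])
        (List.replicate b 2 ++ List.replicate a 1) =
      -(b : ℤ) + ((a : ℤ) - 1) * ((a : ℤ) - 2) / 2 := by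
  rw [charVal, betaSet_cons_one_one, Nat.sub_add_cancel (by omega)]
  exact MN_replicate_two_append_twoLegs b a h
end
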